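/- arXiv:math/0106102 — 7 statements merged into one kernel-verified Lean document; each statement's English description precedes it below -/
import Mathlib

section
/- The reverse order ⟨T_α, >_α⟩ is well-founded and its rank function d_α takes values in ω, i.e., every element of T_α has only finitely many elements above it in <_α. -/
open Cardinal Ordinal

/-- The poset `T α`: strictly decreasing finite lists of ordinals `< α`, ordered by
reverse strict-prefix; the empty list is the top element, and the lists starting with `β`
form the copy of `T β`. -/
def TT (α : Ordinal) : Type 1 :=
  {l : List Ordinal // l.Pairwise (· > ·) ∧ ∀ x ∈ l, x < α}

instance instPOTT (α : Ordinal) : PartialOrder (TT α) where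
  le u v := v.1 <+: u.1
  le_refl u := List.prefix_refl _
  le_trans _ _ _ h1 h2 := List.IsPrefix.trans h2 h1
  le_antisymm _ _ h1 h2 :=
    Subtype.ext (List.IsPrefix.eq_of_length h2 ((List.IsPrefix.length_le h2).antisymm (List.IsPrefix.length_le h1)))

/-- The top element of `T α`. -/
def topT (α : Ordinal) : TT α := ⟨[], by simp, by simp⟩

/-- The rank function of the reversed order `⟨T α, >⟩`. -/
def dT {α : Ordinal} (v : TT α) : ℕ := v.1.length

/-- The rank function of `⟨T α, <⟩`; the top element has rank `α`. -/
def rT {α : Ordinal} (v : TT α) : Ordinal := v.1.getLastD α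

/-- The graph `G_α` on `T α`: `u ~ v` iff `u, v` are comparable and `d u ~_G d v`. -/
def Gg (G : SimpleGraph ℕ) (α : Ordinal) : SimpleGraph (TT α) where
  Adj u v := u ≠ v ∧ (u ≤ v ∨ v ≤ u) ∧ G.Adj (dT u) (dT v)
  symm := ⟨fun _ _ h => ⟨Ne.symm h.1, h.2.1.symm, h.2.2.symm⟩⟩
  loopless := ⟨fun _ h => h.1 rfl⟩

/-- The one-way infinite path `P_ω` on `ℕ`. -/
def rayG : SimpleGraph ℕ := SimpleGraph.fromRel (fun m n => n = m + 1)

/-- `A` is a (not necessarily induced) subgraph of `B`. -/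
def SubCopy {X Y : Type*} (A : SimpleGraph X) (B : SimpleGraph Y) : Prop :=
  ∃ f : X ↪ Y, ∀ u v, A.Adj u v → B.Adj (f u) (f v)

/-- `R` is (isomorphic to) the countable random graph: the extension property. -/
def IsRado (R : SimpleGraph ℕ) : Prop :=
  ∀ A B : Finset ℕ, Disjoint A B →
    ∃ v, v ∉ A ∧ v ∉ B ∧ (∀ a ∈ A, R.Adj v a) ∧ (∀ b ∈ B, ¬R.Adj v b)

/-- An `(s, ξ)`-embedding: an induced embedding of some `G_α`, `ξ ≤ α < λ⁺`, into `H`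
whose image contains `s` as the top part of a chain with `d`-values `0, …, n` and whose
last vertex has rank `> ξ`. -/
def IsSXEmb {V : Type} (G : SimpleGraph ℕ) (lam : Cardinal) (H : SimpleGraph V)
    (s : List V) (ξ : Ordinal) : Prop :=
  ∃ α : Ordinal, ξ ≤ α ∧ α < (Order.succ lam).ord ∧
    ∃ (f : Gg G α ↪g H) (t : List (TT α)),
      s = t.map ⇑f ∧
      (∀ i : Fin t.length, dT (t.get i) = i.1) ∧
      (∀ u ∈ t, ∀ v ∈ t, u ≤ v ∨ v ≤ u) ∧
      (∀ v ∈ t.getLast?, ξ < rT v)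

/-- The set `U` of finite sequences admitting `(s, ξ)`-embeddings for all `ξ < λ⁺`. -/
def UU {V : Type} (G : SimpleGraph ℕ) (lam : Cardinal) (H : SimpleGraph V) :
    Set (List V) :=
  {s | ∀ ξ < (Order.succ lam).ord, IsSXEmb G lam H s ξ}

/-! Going up in `T α` means passing to a strict prefix, so the length `d_α` strictly decreases
along `>`-chains; this bounds the rank, and the elements above `v` are among the finitely many
prefixes of `v`. -/

theorem Acc.rank_le_of_rel_imp_lt {β : Type*} {r : β → β → Prop} {f : β → Ordinal}
    (hf : ∀ a b, r a b → f a < f b) {a : β} (h : Acc r a) : h.rank ≤ f a := by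
  induction h with
  | intro a _ ih =>
    rw [Acc.rank_eq]
    exact Ordinal.iSup_le fun ⟨b, hb⟩ => Order.succ_le_of_lt ((ih b hb).trans_lt (hf b a hb))

namespace TT

variable {α : Ordinal}

theorem dT_strictAnti : StrictAnti (dT : TT α → ℕ) := fun u v huv =>
  have hp : v.1 <+: u.1 := huv.le
  hp.length_le.lt_of_ne fun hl => huv.ne (Subtype.ext (hp.eq_of_length hl)).symm

theorem wellFounded_gt : WellFounded ((· > ·) : TT α → TT α → Prop) :=
  dT_strictAnti.wellFoundedGT.wf

theorem finite_Ioi (v : TT α) : (Set.Ioi v).Finite := by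
  have hsub : Set.Ioi v ⊆ Subtype.val ⁻¹' {l | l ∈ v.1.inits} := fun u (hu : v < u) =>
    (List.mem_inits _ _).mpr hu.le
  exact ((List.finite_toSet _).preimage Subtype.val_injective.injOn).subset hsub

theorem acc_rank_lt_omega0 {v : TT α} (h : Acc ((· > ·) : TT α → TT α → Prop) v) :
    h.rank < ω :=
  (h.rank_le_of_rel_imp_lt fun _ _ hlt => Nat.cast_lt.mpr (dT_strictAnti hlt)).trans_lt
    (natCast_lt_omega0 (dT v))

end TT

/-- the reversed order `⟨T α, >⟩` is well-founded, its rank function takes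
values in `ω`, i.e. every element has only finitely many elements above it. -/
theorem stmt3 (α : Ordinal) :
    ∃ h : WellFounded ((· > ·) : TT α → TT α → Prop),
      (∀ v : TT α, (h.apply v).rank < Ordinal.omega0) ∧
      (∀ v : TT α, {u : TT α | v < u}.Finite) :=
  ⟨TT.wellFounded_gt, fun _ => TT.acc_rank_lt_omega0 _, TT.finite_Ioi⟩
end

section
/- For a countable graph G on vertex set ℕ and ordinal α, the graph G_α on vertex set T_α, where u ~ v iff u and v are <_α-comparable and d_α(u) ~_G d_α(v), contains no infinite one-way path (ray) as a subgraph, provided α < λ⁺ and the vertex set has size at most λ for an infinite cardinal λ; in particular G_α contains no path of length ω as a (not necessarily induced) subgraph. -/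
open Cardinal Ordinal

/-! The ray plays no role beyond its consecutive vertices being distinct and comparable, so we
show by induction on `α` that `T α` has no injective sequence whose consecutive terms are
comparable. The top element `[]` occurs at most once, and comparable nonempty lists share
their first entry, so from some point on every term is `β :: s n` for one fixed `β < α`;
then `s` is such a sequence in `T β`. -/

open Function Filter

lemma List.cons_prefix_cons_or_symm_iff {X : Type*} {a b : X} {s t : List X} :
    (a :: s <+: b :: t ∨ b :: t <+: a :: s) ↔ a = b ∧ (s <+: t ∨ t <+: s) := by
  simp only [List.cons_prefix_cons, eq_comm (a := b)]
  tauto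

theorem not_injective_of_prefix_comparable_succ (α : Ordinal) (l : ℕ → List Ordinal)
    (hl : ∀ n, (l n).Pairwise (· > ·) ∧ ∀ x ∈ l n, x < α)
    (hcomp : ∀ n, l n <+: l (n + 1) ∨ l (n + 1) <+: l n) : ¬ Injective l := by
  induction α using WellFoundedLT.induction generalizing l with
  | ind α IH =>
  intro hinj
  obtain ⟨N, hN⟩ : ∃ N, ∀ n ≥ N, l n ≠ [] := eventually_atTop.1 <|
    Nat.cofinite_eq_atTop ▸ hinj.tendsto_cofinite.eventually (eventually_cofinite_ne [])
  choose b s hbs using fun n => List.exists_cons_of_ne_nil (hN (n + N) (Nat.le_add_left N n))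
  have hstep n : b n = b (n + 1) ∧ (s n <+: s (n + 1) ∨ s (n + 1) <+: s n) := by
    have := hcomp (n + N)
    rwa [hbs n, Nat.add_right_comm, hbs (n + 1), List.cons_prefix_cons_or_symm_iff] at this
  have hb n : b n = b 0 := by
    induction n with
    | zero => rfl
    | succ n ih => rw [← (hstep n).1, ih]
  have hmem n : b 0 < α ∧ (s n).Pairwise (· > ·) ∧ ∀ x ∈ s n, x < b 0 := by
    obtain ⟨hdec, hlt⟩ := hl (n + N)
    rw [hbs n, hb n] at hdec hlt
    rw [List.pairwise_cons] at hdec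
    exact ⟨hlt _ List.mem_cons_self, hdec.2, hdec.1⟩
  refine IH (b 0) (hmem 0).1 s (fun n => (hmem n).2) (fun n => (hstep n).2) fun m n hmn => ?_
  have : l (m + N) = l (n + N) := by rw [hbs m, hbs n, hb m, hb n, hmn]
  exact Nat.add_right_cancel (hinj this)

lemma rayG_adj_succ (n : ℕ) : rayG.Adj n (n + 1) := by
  rw [rayG, SimpleGraph.fromRel_adj]
  exact ⟨by omega, Or.inl rfl⟩

theorem stmt5_general (G : SimpleGraph ℕ) (α : Ordinal) : ¬ SubCopy rayG (Gg G α) := by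
  rintro ⟨f, hf⟩
  refine not_injective_of_prefix_comparable_succ α (fun n => (f n).1) (fun n => (f n).2)
    (fun n => (hf n (n + 1) (rayG_adj_succ n)).2.1.symm) ?_
  exact Subtype.val_injective.comp f.injective

/-- for an infinite cardinal `λ`, `α < λ⁺`, and `|T α| ≤ λ`, the graph
`G_α` contains no infinite ray `P_ω` as a (not necessarily induced) subgraph. -/
theorem stmt5 (G : SimpleGraph ℕ) (lam : Cardinal) (hlam : Cardinal.aleph0 ≤ lam)
    (α : Ordinal) (hα : α < (Order.succ lam).ord)
    (hsize : Cardinal.mk (TT α) ≤ Cardinal.lift.{1} lam) :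
    ¬ SubCopy rayG (Gg G α) :=
  stmt5_general G α
end

section
/- For any countable graph G and ordinal α, every chain C in ⟨T_α, <_α⟩ induces in G_α a graph isomorphic to the subgraph of G induced on {d_α(v) : v ∈ C}, via the map v ↦ d_α(v); moreover d_α is injective on chains. -/
open Cardinal Ordinal

namespace TT

variable {α : Ordinal}

theorem eq_of_le_of_dT_eq {u v : TT α} (h : u ≤ v) (hd : dT u = dT v) : u = v :=
  (Subtype.ext (List.IsPrefix.eq_of_length h hd.symm)).symm

theorem injOn_dT_of_isChain {C : Set (TT α)} (hC : IsChain (· ≤ ·) C) : Set.InjOn dT C := by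
  intro u hu v hv hd
  rcases hC.total hu hv with huv | hvu
  · exact eq_of_le_of_dT_eq huv hd
  · exact (eq_of_le_of_dT_eq hvu hd.symm).symm

end TT

theorem Gg_adj_iff_of_comparable (G : SimpleGraph ℕ) {α : Ordinal} {u v : TT α}
    (huv : u ≤ v ∨ v ≤ u) : (Gg G α).Adj u v ↔ G.Adj (dT u) (dT v) :=
  ⟨fun h => h.2.2, fun h => ⟨fun e => h.ne (congrArg dT e), huv, h⟩⟩

/-- every chain `C` of `T α` induces in `G_α`, via `v ↦ d v`, a graph
isomorphic to the subgraph of `G` induced on `{d v : v ∈ C}`; `d` is injective on chains. -/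
theorem stmt6 (G : SimpleGraph ℕ) (α : Ordinal) (C : Set (TT α))
    (hC : IsChain (· ≤ ·) C) :
    Set.InjOn dT C ∧
      ∀ u ∈ C, ∀ v ∈ C, ((Gg G α).Adj u v ↔ G.Adj (dT u) (dT v)) :=
  ⟨TT.injOn_dT_of_isChain hC, fun _ hu _ hv => Gg_adj_iff_of_comparable G (hC.total hu hv)⟩
end

section
/- Let λ be an infinite cardinal, G a countable graph, and H a graph of size λ. If G_α embeds into H as an induced subgraph for every α < λ⁺, then G embeds into H as an induced subgraph. -/
open Cardinal Ordinal

/-!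
Call a finite sequence `s` of vertices of `H` good (`s ∈ UU`) if for every `ξ < λ⁺` some `G_α`
(`ξ ≤ α < λ⁺`) embeds into `H` so that `s` is the image of a chain `t₀ > t₁ > ⋯` with
`d(tᵢ) = i` whose last element has rank `> ξ`. The empty sequence is good by hypothesis.
Given a good `s` and `ξ`, the embedding for `ξ + 1` extends `s` by the image of a vertex one
step below the end of its chain, of rank `ξ + 1`. As `|V| = λ` and `λ⁺` is regular, a single
vertex serves for all `ξ`, so `s` extends to a good sequence. Iterating yields `g : ℕ → V`, and
since the `tᵢ` are comparable with `d(tᵢ) = i`, `g i ~ g j` in `H` exactly when `i ~ j` in `G`.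
-/

lemma exists_seq_forall_map_range_mem {V : Type*} {U : Set (List V)} (hnil : [] ∈ U)
    (hstep : ∀ s ∈ U, ∃ v, s ++ [v] ∈ U) :
    ∃ g : ℕ → V, ∀ n, (List.range n).map g ∈ U := by
  have : Nonempty V := let ⟨v, _⟩ := hstep [] hnil; ⟨v⟩
  choose! next hnext using hstep
  let seq : ℕ → List V := fun n => Nat.rec [] (fun _ s => s ++ [next s]) n
  have hseq : ∀ n, seq n ∈ U ∧ seq n = (List.range n).map (fun k => next (seq k)) := by
    intro n
    induction n with
    | zero => exact ⟨hnil, rfl⟩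
    | succ n ih =>
      refine ⟨hnext _ ih.1, ?_⟩
      change seq n ++ [next (seq n)] = _
      rw [List.range_succ, List.map_append, ← ih.2, List.map_singleton]
  exact ⟨fun k => next (seq k), fun n => (hseq n).2 ▸ (hseq n).1⟩

namespace TT

variable {α : Ordinal}

lemma rT_le_of_mem (w : TT α) {x : Ordinal} (hx : x ∈ w.1) : rT w ≤ x := by
  have hne : w.1 ≠ [] := List.ne_nil_of_mem hx
  rw [rT, List.getLastD_eq_getLast?, List.getLast?_eq_some_getLast hne, Option.getD_some]
  exact (w.2.1.imp le_of_lt).rel_getLast hx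

lemma rT_le (w : TT α) : rT w ≤ α := by
  rcases List.eq_nil_or_concat w.1 with h | ⟨l, x, h⟩
  · simp [rT, h]
  · simpa [rT, h] using (w.2.2 x (by simp [h])).le

lemma le_of_dT_le_of_comparable {u v : TT α} (huv : u ≤ v ∨ v ≤ u) (hd : dT v ≤ dT u) :
    u ≤ v := by
  refine huv.elim id fun hvu => ?_
  exact (show u = v from Subtype.ext (hvu.eq_of_length (le_antisymm hvu.length_le hd))) ▸ le_rfl

def snoc (w : TT α) (β : Ordinal) (hβ : β < rT w) : TT α :=
  ⟨w.1 ++ [β],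
    List.pairwise_append.2 ⟨w.2.1, List.pairwise_singleton _ _, fun _ hx _ hy =>
      (List.mem_singleton.1 hy) ▸ hβ.trans_le (w.rT_le_of_mem hx)⟩,
    fun x hx => (List.mem_append.1 hx).elim (w.2.2 x) fun h =>
      (List.mem_singleton.1 h) ▸ hβ.trans_le w.rT_le⟩

variable (w : TT α) {β : Ordinal} (hβ : β < rT w)

lemma snoc_le : w.snoc β hβ ≤ w := List.prefix_append _ _

@[simp] lemma dT_snoc : dT (w.snoc β hβ) = dT w + 1 := by simp [snoc, dT]

@[simp] lemma rT_snoc : rT (w.snoc β hβ) = β := by simp [snoc, rT]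

end TT

section LevelChain

variable {α : Ordinal}

def IsLevelChain (t : List (TT α)) : Prop :=
  (∀ i : Fin t.length, dT (t.get i) = i.1) ∧ (∀ u ∈ t, ∀ v ∈ t, u ≤ v ∨ v ≤ u)

namespace IsLevelChain

variable {t : List (TT α)} (ht : IsLevelChain t)
include ht

lemma dT_getElem {i : ℕ} (hi : i < t.length) : dT t[i] = i := ht.1 ⟨i, hi⟩

lemma dT_lt_length {x : TT α} (hx : x ∈ t) : dT x < t.length := by
  obtain ⟨i, hi, rfl⟩ := List.getElem_of_mem hx
  rwa [ht.dT_getElem]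

lemma getLast_le {w x : TT α} (hw : w ∈ t.getLast?) (hx : x ∈ t) : w ≤ x := by
  obtain ⟨t₀, rfl⟩ := List.getLast?_eq_some_iff.1 hw
  have hdw : dT w = t₀.length := by simpa using ht.dT_getElem (i := t₀.length) (by simp)
  have hdx := ht.dT_lt_length hx
  simp only [List.length_append, List.length_singleton] at hdx
  exact TT.le_of_dT_le_of_comparable (ht.2 w (by simp) x hx) (by omega)

lemma append_singleton {u : TT α} (hu : dT u = t.length) (hle : ∀ x ∈ t, u ≤ x) :
    IsLevelChain (t ++ [u]) := by
  refine ⟨fun ⟨i, hi⟩ => ?_, ?_⟩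
  · simp only [List.length_append, List.length_singleton, List.get_eq_getElem] at hi ⊢
    rcases Nat.lt_or_ge i t.length with h | h
    · rw [List.getElem_append_left h, ht.dT_getElem h]
    · rw [List.getElem_append_right h]
      simp only [show i - t.length = 0 by omega, List.getElem_singleton]
      omega
  · simp only [List.mem_append, List.mem_singleton]
    rintro x (hx | rfl) y (hy | rfl)
    exacts [ht.2 x hx y hy, Or.inr (hle x hx), Or.inl (hle y hy), Or.inl le_rfl]

lemma exists_lowerBound {β : Ordinal} (hβ : β ≤ α) (hlast : ∀ w ∈ t.getLast?, β < rT w) :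
    ∃ u : TT α, dT u = t.length ∧ (∀ x ∈ t, u ≤ x) ∧ β ≤ rT u := by
  rcases List.eq_nil_or_concat' t with rfl | ⟨t₀, w, rfl⟩
  · exact ⟨topT α, rfl, by simp, hβ⟩
  · have hw : w ∈ (t₀ ++ [w]).getLast? := by simp
    have hβw := hlast w hw
    refine ⟨w.snoc β hβw, ?_, fun x hx => (w.snoc_le hβw).trans (ht.getLast_le hw hx),
      by simp⟩
    simpa using ht.dT_getElem (i := t₀.length) (by simp)

lemma eq_of_getElem_eq {i j : ℕ} (hi : i < t.length) (hj : j < t.length) (h : t[i] = t[j]) :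
    i = j := by
  rw [← ht.dT_getElem hi, ← ht.dT_getElem hj, h]

lemma gg_adj_getElem_iff (G : SimpleGraph ℕ) {i j : ℕ} (hi : i < t.length) (hj : j < t.length) :
    (Gg G α).Adj t[i] t[j] ↔ G.Adj i j := by
  change t[i] ≠ t[j] ∧ _ ∧ G.Adj (dT t[i]) (dT t[j]) ↔ _
  rw [ht.dT_getElem hi, ht.dT_getElem hj]
  refine ⟨fun h => h.2.2, fun h => ⟨fun he => G.ne_of_adj h (ht.eq_of_getElem_eq hi hj he),
    ht.2 _ (List.getElem_mem hi) _ (List.getElem_mem hj), h⟩⟩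

end IsLevelChain

end LevelChain

section Embeddings

variable {V : Type} {G : SimpleGraph ℕ} {lam : Cardinal} {H : SimpleGraph V}

lemma isSXEmb_iff {s : List V} {ξ : Ordinal} :
    IsSXEmb G lam H s ξ ↔ ∃ α : Ordinal, ξ ≤ α ∧ α < (Order.succ lam).ord ∧
      ∃ (f : Gg G α ↪g H) (t : List (TT α)),
        s = t.map ⇑f ∧ IsLevelChain t ∧ ∀ v ∈ t.getLast?, ξ < rT v := by
  simp only [IsSXEmb, IsLevelChain, and_assoc]

lemma IsSXEmb.mono {s : List V} {ξ ξ' : Ordinal} (h : IsSXEmb G lam H s ξ) (hle : ξ' ≤ ξ) :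
    IsSXEmb G lam H s ξ' := by
  obtain ⟨α, hξα, hα, f, t, hs, hd, hc, hlast⟩ := h
  exact ⟨α, hle.trans hξα, hα, f, t, hs, hd, hc, fun v hv => hle.trans_lt (hlast v hv)⟩

lemma nil_mem_UU (hemb : ∀ α < (Order.succ lam).ord, Nonempty (Gg G α ↪g H)) :
    [] ∈ UU G lam H := fun ξ hξ =>
  let ⟨f⟩ := hemb ξ hξ
  ⟨ξ, le_rfl, hξ, f, [], rfl, fun i => i.elim0, by simp, by simp⟩

lemma exists_isSXEmb_append (hlam : ℵ₀ ≤ lam) {s : List V} (hs : s ∈ UU G lam H)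
    {ξ : Ordinal} (hξ : ξ < (Order.succ lam).ord) : ∃ v, IsSXEmb G lam H (s ++ [v]) ξ := by
  have hξ' : Order.succ ξ < (Order.succ lam).ord :=
    (isSuccLimit_ord (hlam.trans (Order.le_succ lam))).succ_lt hξ
  obtain ⟨α, hξα, hα, f, t, rfl, ht, hlast⟩ := isSXEmb_iff.1 (hs _ hξ')
  obtain ⟨u, hdu, hle, hru⟩ := ht.exists_lowerBound hξα hlast
  refine ⟨f u, isSXEmb_iff.2 ⟨α, (Order.le_succ ξ).trans hξα, hα, f, t ++ [u], by simp,
    ht.append_singleton hdu hle, ?_⟩⟩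
  simpa using (Order.lt_succ ξ).trans_le hru

/-- If each `v` failed at some `ξ_v < λ⁺`, all would fail at `sup_v ξ_v`, which is still
`< λ⁺` because `|V| = λ < cof λ⁺`. -/
lemma exists_append_mem_UU (hlam : ℵ₀ ≤ lam) (hV : Cardinal.mk V = lam) {s : List V}
    (hs : s ∈ UU G lam H) : ∃ v, s ++ [v] ∈ UU G lam H := by
  by_contra! hbad
  choose ξ hξ hfail using fun v => not_forall₂.1 (hbad v)
  have hsup : (⨆ v, ξ v) < (Order.succ lam).ord :=
    Ordinal.iSup_lt_of_lt_cof
      (by rw [(isRegular_succ hlam).cof_ord, hV]; exact Order.lt_succ lam) hξ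
  obtain ⟨v, hv⟩ := exists_isSXEmb_append hlam hs hsup
  exact hfail v (hv.mono (Ordinal.le_iSup ξ v))

lemma adj_iff_and_inj_of_map_range_mem_UU {g : ℕ → V} {n : ℕ}
    (hg : (List.range n).map g ∈ UU G lam H)
    {i j : ℕ} (hi : i < n) (hj : j < n) :
    (H.Adj (g i) (g j) ↔ G.Adj i j) ∧ (g i = g j → i = j) := by
  obtain ⟨α, -, -, f, t, hmap, ht, -⟩ :=
    isSXEmb_iff.1 (hg 0 (ord_pos.2 (Order.bot_lt_succ lam)))
  have hlen : t.length = n := by simpa using (congrArg List.length hmap).symm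
  have hg_eq : ∀ k (hk : k < n), g k = f (t[k]'(hlen ▸ hk)) := fun k hk => by
    have hk' : k < ((List.range n).map g).length := by simpa using hk
    simpa [List.getElem_range] using List.getElem_of_eq hmap hk'
  rw [hg_eq i hi, hg_eq j hj, f.map_adj_iff, ht.gg_adj_getElem_iff, f.injective.eq_iff]
  exact ⟨Iff.rfl, ht.eq_of_getElem_eq _ _⟩

end Embeddings

/-- main theorem: if `G_α` embeds into `H` as an induced subgraph for
every `α < λ⁺`, then `G` embeds into `H` as an induced subgraph. -/
theorem stmt7 {V : Type} (lam : Cardinal) (hlam : Cardinal.aleph0 ≤ lam)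
    (G : SimpleGraph ℕ) (H : SimpleGraph V) (hV : Cardinal.mk V = lam)
    (hemb : ∀ α : Ordinal, α < (Order.succ lam).ord → Nonempty (Gg G α ↪g H)) :
    Nonempty (G ↪g H) := by
  obtain ⟨g, hg⟩ := exists_seq_forall_map_range_mem (nil_mem_UU hemb)
    fun _ hs => exists_append_mem_UU hlam hV hs
  have hspec (i j : ℕ) := adj_iff_and_inj_of_map_range_mem_UU (hg (max i j + 1))
    (Nat.lt_succ_of_le (le_max_left i j)) (Nat.lt_succ_of_le (le_max_right i j))
  exact ⟨⟨⟨g, fun i j => (hspec i j).2⟩, (hspec _ _).1⟩⟩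
end

section
/- With notation as in the main construction, if ⟨v_n : n < ω⟩ is a sequence of vertices of H each of whose finite initial segments lies in U (the set of sequences admitting (s, ξ)-embeddings for all ξ < λ⁺), then the map n ↦ v_n is an induced-subgraph embedding of G into H. -/
open Cardinal Ordinal

section

variable {V : Type} {G : SimpleGraph ℕ} {lam : Cardinal} {H : SimpleGraph V} {s : List V}
  {ξ : Ordinal}

theorem IsSXEmb.nodup (h : IsSXEmb G lam H s ξ) : s.Nodup := by
  obtain ⟨α, -, -, f, t, rfl, hd, -, -⟩ := h
  refine List.Nodup.map f.injective (List.nodup_iff_injective_get.2 fun i j hij => Fin.ext ?_)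
  rw [← hd i, ← hd j, hij]

/-- The vertices of `s` lie on a chain of `G_α` with `d`-values `0, …, n`, so their adjacency
in `G_α` is that of their indices in `G`. -/
theorem IsSXEmb.adj_getElem_iff (h : IsSXEmb G lam H s ξ) {i j : ℕ} (hi : i < s.length)
    (hj : j < s.length) : H.Adj s[i] s[j] ↔ G.Adj i j := by
  obtain ⟨α, -, -, f, t, rfl, hd, hchain, -⟩ := h
  rw [List.length_map] at hi hj
  have hdi : dT t[i] = i := hd ⟨i, hi⟩
  have hdj : dT t[j] = j := hd ⟨j, hj⟩
  simp only [List.getElem_map, f.map_adj_iff]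
  change t[i] ≠ t[j] ∧ (t[i] ≤ t[j] ∨ t[j] ≤ t[i]) ∧ G.Adj (dT t[i]) (dT t[j]) ↔ _
  rw [hdi, hdj]
  refine ⟨fun hadj => hadj.2.2, fun hG => ?_⟩
  have hne : t[i] ≠ t[j] := fun heq => hG.ne (by rw [← hdi, ← hdj, heq])
  exact ⟨hne, hchain _ (List.getElem_mem _) _ (List.getElem_mem _), hG⟩

end

theorem stmt10_general {V : Type} (lam : Cardinal)
    (G : SimpleGraph ℕ) (H : SimpleGraph V)
    (v : ℕ → V)
    (hv : ∀ n : ℕ, (List.ofFn fun i : Fin n => v i.1) ∈ UU G lam H) :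
    ∃ f : G ↪g H, ⇑f = v := by
  have hseg (n : ℕ) : IsSXEmb G lam H (List.ofFn fun i : Fin n => v i.1) 0 :=
    hv n 0 (ord_pos.2 (succ_pos lam))
  refine ⟨⟨⟨v, fun m n hmn => ?_⟩, fun {m n} => ?_⟩, rfl⟩
  all_goals
    have hlen : (List.ofFn fun i : Fin (max m n + 1) => v i.1).length = max m n + 1 :=
      List.length_ofFn
  · refine ((hseg (max m n + 1)).nodup.getElem_inj_iff (hi := by omega) (hj := by omega)).1 ?_
    simpa only [List.getElem_ofFn] using hmn
  · have hadj := (hseg (max m n + 1)).adj_getElem_iff (i := m) (j := n) (by omega) (by omega)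
    simp only [List.getElem_ofFn] at hadj
    exact hadj

/-- if every finite initial segment of `⟨v_n : n < ω⟩` lies in `U`,
then `n ↦ v_n` is an induced-subgraph embedding of `G` into `H`. -/
theorem stmt10 {V : Type} (lam : Cardinal) (hlam : Cardinal.aleph0 ≤ lam)
    (G : SimpleGraph ℕ) (H : SimpleGraph V) (hV : Cardinal.mk V = lam)
    (v : ℕ → V)
    (hv : ∀ n : ℕ, (List.ofFn fun i : Fin n => v i.1) ∈ UU G lam H) :
    ∃ f : G ↪g H, ⇑f = v :=
  stmt10_general lam G H v hv
end

section
/- If β < α, then T_β embeds into T_α as a downward-closed suborder below a single element; consequently, if β < α then G_β embeds into G_α as an induced subgraph, for any countable graph G. -/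
open Cardinal Ordinal

namespace TT

variable {α β : Ordinal}

def consEmb (h : β < α) : TT β ↪o TT α :=
  OrderEmbedding.ofMapLEIff
    (fun u => ⟨β :: u.1, List.pairwise_cons.2 ⟨u.2.2, u.2.1⟩,
      List.forall_mem_cons.2 ⟨h, fun x hx => (u.2.2 x hx).trans h⟩⟩)
    (fun _ _ => List.cons_prefix_cons.trans (and_iff_right rfl))

theorem range_consEmb (h : β < α) :
    Set.range (consEmb h) = Set.Iic (consEmb h (topT β)) := by
  ext y
  constructor
  · rintro ⟨u, rfl⟩
    exact (consEmb h).monotone (List.nil_prefix : [] <+: u.1)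
  · rintro ⟨rest, hy : β :: rest = y.1⟩
    have hdec : (β :: rest).Pairwise (· > ·) := hy ▸ y.2.1
    exact ⟨⟨rest, (List.pairwise_cons.1 hdec).2, (List.pairwise_cons.1 hdec).1⟩, Subtype.ext hy⟩

/-- `consEmb` raises `dT` by one, so the embedding of graphs goes through this inclusion instead. -/
def castLE (h : β ≤ α) : TT β ↪o TT α :=
  OrderEmbedding.ofMapLEIff (fun u => ⟨u.1, u.2.1, fun x hx => (u.2.2 x hx).trans_le h⟩)
    (fun _ _ => Iff.rfl)

@[simp]
theorem dT_castLE (h : β ≤ α) (u : TT β) : dT (castLE h u) = dT u := rfl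

end TT

def Gg.embeddingOfOrderEmbedding (G : SimpleGraph ℕ) {α β : Ordinal} (e : TT β ↪o TT α)
    (he : ∀ u, dT (e u) = dT u) : Gg G β ↪g Gg G α where
  toEmbedding := e.toEmbedding
  map_rel_iff' {u v} := by
    change (e u ≠ e v ∧ (e u ≤ e v ∨ e v ≤ e u) ∧ G.Adj (dT (e u)) (dT (e v))) ↔
      (u ≠ v ∧ (u ≤ v ∨ v ≤ u) ∧ G.Adj (dT u) (dT v))
    simp only [ne_eq, e.injective.eq_iff, e.le_iff_le, he]

/-- if `β < α` then `T β` embeds into `T α` as the downward-closed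
suborder below a single element, and consequently `G_β` embeds into `G_α` as an
induced subgraph for every countable `G`. -/
theorem stmt16 (α β : Ordinal) (h : β < α) :
    (∃ e : TT β ↪o TT α, Set.range ⇑e = {y : TT α | y ≤ e (topT β)}) ∧
      ∀ G : SimpleGraph ℕ, Nonempty (Gg G β ↪g Gg G α) :=
  ⟨⟨TT.consEmb h, TT.range_consEmb h⟩,
    fun G => ⟨Gg.embeddingOfOrderEmbedding G (TT.castLE h.le) (TT.dT_castLE h.le)⟩⟩
end

section
/- For every element v ∈ T_α with r_α(v) ≥ ξ + 1 (where r_α is the rank of <_α), there exists w <_α v with d_α(w) = d_α(v) + 1 and r_α(w) ≥ ξ. -/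
open Cardinal Ordinal

lemma getLastD_le_of_mem :
    ∀ l : List Ordinal, l.Pairwise (· > ·) → ∀ x ∈ l, ∀ d, l.getLastD d ≤ x := by
  intro l
  induction l with
  | nil => simp
  | cons a t ih =>
    intro hs x hx d
    rw [List.getLastD_cons]
    rcases List.mem_cons.mp hx with hx | hx
    · subst hx
      cases t with
      | nil => simp
      | cons b u =>
        exact (ih hs.of_cons b (by simp) x).trans
          (le_of_lt (List.rel_of_pairwise_cons hs (a' := b) (by simp)))
    · exact ih hs.of_cons x hx a

/-- below any element of rank `≥ ξ + 1` there is an element of the next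
down-rank level whose rank is still `≥ ξ`. -/
theorem stmt17 (α ξ : Ordinal) (v : TT α) (h : ξ + 1 ≤ rT v) :
    ∃ w : TT α, w < v ∧ dT w = dT v + 1 ∧ ξ ≤ rT w := by
  obtain ⟨l, hs, hlt⟩ := v
  have hξr : ξ < l.getLastD α := Order.add_one_le_iff.mp h
  have hmem : ∀ x ∈ l, ξ < x := fun x hx =>
    lt_of_lt_of_le hξr (getLastD_le_of_mem l hs x hx α)
  have hξα : ξ < α := by
    cases l with
    | nil => simpa using hξr
    | cons a t =>
      exact lt_of_lt_of_le hξr ((getLastD_le_of_mem _ hs a (by simp) α).trans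
        (le_of_lt (hlt a (by simp))))
  refine ⟨⟨l ++ [ξ], ?_, ?_⟩, ?_, ?_, ?_⟩
  · rw [List.pairwise_append]
    exact ⟨hs, by simp, by simpa using hmem⟩
  · intro x hx
    rcases List.mem_append.mp hx with hx | hx
    · exact hlt x hx
    · simp at hx; simpa [hx]
  · constructor
    · exact ⟨[ξ], rfl⟩
    · intro heq
      have := heq.length_le
      simp at this
  · simp [dT]
  · simp [rT]
end
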